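/- For every integer n ≥ 3, there exists a vector a = (a1,...,an) of positive integers with a1 ≤ ... ≤ an, gcd(a1,...,an) = 1, and a1 ≥ n, such that F(a) > 2·an·⌊a1/n⌋ − a1. (One such family: a = (8, 8k2, ..., 8k_{n-1}, 59) with 1 ≤ k2 ≤ ... ≤ k_{n-1} ≤ 7, for which F(a) = 405 > 228.) -/

import Mathlib

/-! Take `a = (n + 1, …, n + 1, n + 2)`. Its entries generate the same numerical semigroup as the
coprime pair `{n + 1, n + 2}`, so by the two-generator formula `F(a) = (n + 1)(n + 2) - (n + 1) -
(n + 2) = n² + n - 1`, while `⌊a₁/n⌋ = 1` makes Selmer's bound only `2(n + 2) - (n + 1) = n + 3`. -/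

theorem frobeniusNumber_range_iff_isGreatest {ι : Type*} [Fintype ι] (a : ι → ℕ) (F : ℕ) :
    FrobeniusNumber F (Set.range a) ↔
      IsGreatest {b : ℕ | ¬ ∃ z : ι → ℕ, b = ∑ i, a i * z i} F := by
  simp only [FrobeniusNumber, AddSubmonoid.mem_closure_range_iff_of_fintype, smul_eq_mul,
    mul_comm]

theorem Finset.gcd_eq_one_of_coprime {ι : Type*} {s : Finset ι} {a : ι → ℕ} {i j : ι}
    (hi : i ∈ s) (hj : j ∈ s) (h : (a i).Coprime (a j)) : s.gcd a = 1 :=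
  Nat.eq_one_of_dvd_coprimes h (Finset.gcd_dvd hi) (Finset.gcd_dvd hj)

def selmerCounterexample (n : ℕ) (i : Fin n) : ℕ :=
  if (i : ℕ) + 1 < n then n + 1 else n + 2

namespace selmerCounterexample

variable {n : ℕ}

theorem apply_of_lt {i : Fin n} (hi : (i : ℕ) + 1 < n) : selmerCounterexample n i = n + 1 :=
  if_pos hi

theorem apply_last {i : Fin n} (hi : (i : ℕ) = n - 1) : selmerCounterexample n i = n + 2 :=
  if_neg (by omega)

theorem pos (i : Fin n) : 0 < selmerCounterexample n i := by
  unfold selmerCounterexample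
  split_ifs <;> omega

theorem monotone : Monotone (selmerCounterexample n) := by
  intro i j hij
  have : (i : ℕ) ≤ j := hij
  unfold selmerCounterexample
  split_ifs <;> omega

theorem range_eq (hn : 2 ≤ n) : Set.range (selmerCounterexample n) = {n + 1, n + 2} := by
  ext b
  constructor
  · rintro ⟨i, rfl⟩
    unfold selmerCounterexample
    split_ifs <;> simp
  · rintro (rfl | rfl)
    · exact ⟨⟨0, by omega⟩, apply_of_lt (by simp; omega)⟩
    · exact ⟨⟨n - 1, by omega⟩, apply_last rfl⟩

theorem frobeniusNumber (hn : 2 ≤ n) :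
    FrobeniusNumber ((n + 1) * (n + 2) - (n + 1) - (n + 2))
      (Set.range (selmerCounterexample n)) := by
  rw [range_eq hn]
  exact frobeniusNumber_pair (Nat.coprime_self_add_right.mpr (Nat.coprime_one_right _))
    (by omega) (by omega)

theorem gcd_eq_one (hn : 2 ≤ n) : Finset.univ.gcd (selmerCounterexample n) = 1 :=
  Finset.gcd_eq_one_of_coprime (i := ⟨0, by omega⟩) (j := ⟨n - 1, by omega⟩)
    (Finset.mem_univ _) (Finset.mem_univ _) <| by
      rw [apply_of_lt (by simp; omega), apply_last rfl]
      exact Nat.coprime_self_add_right.mpr (Nat.coprime_one_right _)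

end selmerCounterexample

open Finset in
/-- For every `n ≥ 3` there is a vector of positive integers `a1 ≤ ⋯ ≤ an` with gcd 1 and
`a1 ≥ n` whose Frobenius number exceeds Selmer's bound `2·an·⌊a1/n⌋ − a1`. -/
theorem selmer_bound_fails_all_dims (n : ℕ) (hn : 3 ≤ n) :
    ∃ a : Fin n → ℕ, (∀ i, 0 < a i) ∧ Monotone a ∧ Finset.univ.gcd a = 1 ∧
      n ≤ a ⟨0, by omega⟩ ∧
      ∃ F : ℕ, IsGreatest {b : ℕ | ¬ ∃ z : Fin n → ℕ, b = ∑ i, a i * z i} F ∧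
        F > 2 * a ⟨n - 1, by omega⟩ * (a ⟨0, by omega⟩ / n) - a ⟨0, by omega⟩ := by
  have hfirst : selmerCounterexample n ⟨0, by omega⟩ = n + 1 :=
    selmerCounterexample.apply_of_lt (by simp; omega)
  have hlast : selmerCounterexample n ⟨n - 1, by omega⟩ = n + 2 :=
    selmerCounterexample.apply_last rfl
  refine ⟨selmerCounterexample n, selmerCounterexample.pos, selmerCounterexample.monotone,
    selmerCounterexample.gcd_eq_one (by omega), by omega,
    (n + 1) * (n + 2) - (n + 1) - (n + 2),
    (frobeniusNumber_range_iff_isGreatest _ _).mp (selmerCounterexample.frobeniusNumber (by omega)),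
    ?_⟩
  rw [hfirst, hlast, Nat.div_eq_of_lt_le (k := 1) (by omega) (by omega)]
  have hsq : 3 * n ≤ n * n := Nat.mul_le_mul_right n hn
  have hexpand : (n + 1) * (n + 2) = n * n + 3 * n + 2 := by ring
  omega
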